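/- Let A, B be bounded operators between Hilbert spaces with B having closed range. If range(A) ⊆ range(B), range(A*) ⊆ range(B*), and A B† A = A (where B† is the bounded Moore-Penrose inverse of B), then A ≤⁻ B in the minus order: the operators Q := B† A and Q̃ := (B*)† A* are bounded idempotents satisfying B Q = A and B* Q̃ = A*. -/

import Mathlib

open ContinuousLinearMap

/-- The orthogonal projection onto the closure of the range of `A`. -/
noncomputable def projCR {E F : Type*} [NormedAddCommGroup E] [InnerProductSpace ℂ E]
    [NormedAddCommGroup F] [InnerProductSpace ℂ F] [CompleteSpace F]
    (A : E →L[ℂ] F) : F →L[ℂ] F :=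
  (LinearMap.range (A : E →ₗ[ℂ] F)).topologicalClosure.subtypeL ∘L
    Submodule.orthogonalProjectionOnto (LinearMap.range (A : E →ₗ[ℂ] F)).topologicalClosure

/-- `Td` is the (bounded) Moore-Penrose inverse of `T`: `T Td = P_T`, `Td T = P_{T*}`,
and `Td T Td = Td`. -/
def IsMPInv {E F : Type*} [NormedAddCommGroup E] [InnerProductSpace ℂ E] [CompleteSpace E]
    [NormedAddCommGroup F] [InnerProductSpace ℂ F] [CompleteSpace F]
    (T : E →L[ℂ] F) (Td : F →L[ℂ] E) : Prop :=
  T ∘L Td = projCR T ∧ Td ∘L T = projCR (adjoint T) ∧ Td ∘L (T ∘L Td) = Td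

section projCR

variable {E E' F : Type*} [NormedAddCommGroup E] [InnerProductSpace ℂ E]
  [NormedAddCommGroup E'] [InnerProductSpace ℂ E']
  [NormedAddCommGroup F] [InnerProductSpace ℂ F] [CompleteSpace F]

lemma adjoint_projCR (T : E →L[ℂ] F) : adjoint (projCR T) = projCR T :=
  isSelfAdjoint_starProjection _

lemma projCR_comp_of_range_le (T : E →L[ℂ] F) (C : E' →L[ℂ] F)
    (h : LinearMap.range (C : E' →ₗ[ℂ] F) ≤
      (LinearMap.range (T : E →ₗ[ℂ] F)).topologicalClosure) :
    projCR T ∘L C = C := by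
  ext x
  exact Submodule.starProjection_eq_self_iff.mpr (h ⟨x, rfl⟩)

lemma comp_projCR_of_range_adjoint_le [CompleteSpace E'] (T : E →L[ℂ] F) (C : F →L[ℂ] E')
    (h : LinearMap.range (adjoint C : E' →ₗ[ℂ] F) ≤
      (LinearMap.range (T : E →ₗ[ℂ] F)).topologicalClosure) :
    C ∘L projCR T = C := by
  rw [← adjoint_adjoint (C ∘L projCR T), adjoint_comp, adjoint_projCR,
    projCR_comp_of_range_le T _ h, adjoint_adjoint]

end projCR

lemma comp_comp_self_of_comp_comp_eq {E F : Type*} [NormedAddCommGroup E] [NormedSpace ℂ E]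
    [NormedAddCommGroup F] [NormedSpace ℂ F] {X : E →L[ℂ] F} {Y : F →L[ℂ] E}
    (h : X ∘L (Y ∘L X) = X) : (X ∘L Y) ∘L (X ∘L Y) = X ∘L Y := by
  rw [comp_assoc, ← comp_assoc Y, ← comp_assoc, h]

section IsMPInv

variable {E F : Type*} [NormedAddCommGroup E] [InnerProductSpace ℂ E] [CompleteSpace E]
  [NormedAddCommGroup F] [InnerProductSpace ℂ F] [CompleteSpace F]

lemma IsMPInv.comp_comp_of_range_le {T : E →L[ℂ] F} {Td : F →L[ℂ] E} (hT : IsMPInv T Td)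
    {A : E →L[ℂ] F}
    (h : LinearMap.range (A : E →ₗ[ℂ] F) ≤ LinearMap.range (T : E →ₗ[ℂ] F)) :
    T ∘L (Td ∘L A) = A := by
  rw [← comp_assoc, hT.1,
    projCR_comp_of_range_le T A (h.trans (Submodule.le_topologicalClosure _))]

lemma IsMPInv.comp_comp_of_range_adjoint_le {T : E →L[ℂ] F} {Td : F →L[ℂ] E}
    (hT : IsMPInv T Td) {A : E →L[ℂ] F}
    (h : LinearMap.range (adjoint A : F →ₗ[ℂ] E) ≤
      LinearMap.range (adjoint T : F →ₗ[ℂ] E)) :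
    A ∘L (Td ∘L T) = A := by
  rw [hT.2.1, comp_projCR_of_range_adjoint_le _ A (h.trans (Submodule.le_topologicalClosure _))]

end IsMPInv

variable {H K : Type*} [NormedAddCommGroup H] [InnerProductSpace ℂ H] [CompleteSpace H]
  [NormedAddCommGroup K] [InnerProductSpace ℂ K] [CompleteSpace K]

theorem stmt9_general (A B : H →L[ℂ] K) (Bd : K →L[ℂ] H)
    (hBd : IsMPInv B Bd)
    (h1 : LinearMap.range (A : H →ₗ[ℂ] K) ≤ LinearMap.range (B : H →ₗ[ℂ] K))
    (h2 : LinearMap.range (adjoint A : K →ₗ[ℂ] H) ≤ LinearMap.range (adjoint B : K →ₗ[ℂ] H))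
    (h3 : A ∘L (Bd ∘L A) = A) :
    (Bd ∘L A) ∘L (Bd ∘L A) = Bd ∘L A ∧
    ((adjoint Bd) ∘L (adjoint A)) ∘L ((adjoint Bd) ∘L (adjoint A)) =
      (adjoint Bd) ∘L (adjoint A) ∧
    B ∘L (Bd ∘L A) = A ∧
    (adjoint B) ∘L ((adjoint Bd) ∘L (adjoint A)) = adjoint A := by
  have hABdB : A ∘L (Bd ∘L B) = A := hBd.comp_comp_of_range_adjoint_le h2
  refine ⟨?_, ?_, hBd.comp_comp_of_range_le h1, ?_⟩
  · rw [comp_assoc Bd, h3]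
  · rw [← adjoint_comp, ← adjoint_comp, comp_comp_self_of_comp_comp_eq h3]
  · rw [← adjoint_comp, ← adjoint_comp, comp_assoc, hABdB]

theorem stmt9 (A B : H →L[ℂ] K) (Bd : K →L[ℂ] H)
    (hB : IsClosed (LinearMap.range (B : H →ₗ[ℂ] K) : Set K)) (hBd : IsMPInv B Bd)
    (h1 : LinearMap.range (A : H →ₗ[ℂ] K) ≤ LinearMap.range (B : H →ₗ[ℂ] K))
    (h2 : LinearMap.range (adjoint A : K →ₗ[ℂ] H) ≤ LinearMap.range (adjoint B : K →ₗ[ℂ] H))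
    (h3 : A ∘L (Bd ∘L A) = A) :
    (Bd ∘L A) ∘L (Bd ∘L A) = Bd ∘L A ∧
    ((adjoint Bd) ∘L (adjoint A)) ∘L ((adjoint Bd) ∘L (adjoint A)) =
      (adjoint Bd) ∘L (adjoint A) ∧
    B ∘L (Bd ∘L A) = A ∧
    (adjoint B) ∘L ((adjoint Bd) ∘L (adjoint A)) = adjoint A :=
  stmt9_general A B Bd hBd h1 h2 h3
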